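/- arXiv:2410.13701 — 3 statements merged into one kernel-verified Lean document; each statement's English description precedes it below -/
import Mathlib

section
/- Let H be a Hilbert space and T_j (j ∈ ℕ) bounded operators on H such that ‖T_j T_ℓ^*‖ ≤ C·2^{-|j-ℓ|} and ‖T_j^* T_ℓ‖ ≤ C·2^{-|j-ℓ|} for all j, ℓ. Then for any finitely supported scalar sequence α with |α_j| ≤ 1, the norm of ∑_j α_j T_j is bounded by a constant depending only on C (independently of the support of α). -/
/-! The Cotlar–Stein argument. Put `y = ∑ xᵢ`. For `n` a power of two,
`‖y‖ ^ (2n) = ‖(y y⋆)ⁿ‖`, and `(y y⋆)ⁿ` expands into the words `x i₁ x j₁⋆ ⋯ x iₙ x jₙ⋆`.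
Grouping a word as `(x i₁ x j₁⋆) ⋯ (x iₙ x jₙ⋆)` or as `x i₁ (x j₁⋆ x i₂) ⋯ (x jₙ₋₁⋆ x iₙ) x jₙ⋆`
gives two bounds whose geometric mean is `M · w i₁ j₁ · w j₁ i₂ ⋯ w iₙ jₙ`. Summing this chain over
all indices, one row sum at a time, gives `‖y‖ ^ (2n) ≤ |ι| M ^ (2n)`, and letting `n → ∞` removes
the factor `|ι|`. The theorem is the case `xⱼ = αⱼ Tⱼ`, `w j ℓ = √C 2 ^ (-|j - ℓ| / 2)`, whose row
sums are at most `√C ∑ₖ 2 ^ (-|k| / 2)`. -/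

open Finset Filter Topology

theorem Fintype.sum_pow_eq_sum_list_prod_ofFn {R κ : Type*} [Semiring R] [Fintype κ]
    (f : κ → R) (n : ℕ) :
    (∑ k, f k) ^ n = ∑ g : Fin n → κ, (List.ofFn fun i => f (g i)).prod := by
  induction n with
  | zero => simp
  | succ n ih =>
    rw [pow_succ', ih, Finset.sum_mul_sum, ← (Fin.consEquiv fun _ => κ).sum_comp,
      Fintype.sum_prod_type]
    simp [List.ofFn_succ]

theorem Real.le_of_frequently_pow_le_mul_pow {a b c : ℝ} (hb : 0 ≤ b)
    (h : ∃ᶠ n in atTop, a ^ n ≤ c * b ^ n) : a ≤ b := by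
  by_contra! hba
  have ha : 0 < a := hb.trans_lt hba
  have hlim : Tendsto (fun n => c * (b / a) ^ n) atTop (𝓝 (c * 0)) :=
    (tendsto_pow_atTop_nhds_zero_of_lt_one (div_nonneg hb ha.le)
      ((div_lt_one ha).2 hba)).const_mul c
  obtain ⟨n, hn, hsmall⟩ :=
    (h.and_eventually (hlim.eventually (gt_mem_nhds (show c * 0 < 1 by simp)))).exists
  rw [div_pow, ← mul_div_assoc, div_lt_one (pow_pos ha n)] at hsmall
  exact hn.not_gt hsmall

namespace CotlarStein

variable {ι E : Type*}

def chainWeight (w : ι → ι → ℝ) : ι → List (ι × ι) → ℝ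
  | _, [] => 1
  | ℓ, p :: L => w ℓ p.1 * w p.1 p.2 * chainWeight w p.2 L

theorem chainWeight_nonneg {w : ι → ι → ℝ} (hw : ∀ i j, 0 ≤ w i j) (ℓ : ι) (L : List (ι × ι)) :
    0 ≤ chainWeight w ℓ L := by
  induction L generalizing ℓ with
  | nil => exact zero_le_one
  | cons p L ih => exact mul_nonneg (mul_nonneg (hw _ _) (hw _ _)) (ih p.2)

theorem sum_chainWeight_le [Fintype ι] {w : ι → ι → ℝ} {M : ℝ} (hw : ∀ i j, 0 ≤ w i j)
    (hM : ∀ i, ∑ j, w i j ≤ M) (n : ℕ) (ℓ : ι) :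
    ∑ g : Fin n → ι × ι, chainWeight w ℓ (List.ofFn g) ≤ M ^ (2 * n) := by
  have hM0 : 0 ≤ M := (sum_nonneg fun j _ => hw ℓ j).trans (hM ℓ)
  induction n generalizing ℓ with
  | zero => simp [chainWeight]
  | succ n ih =>
    rw [← (Fin.consEquiv fun _ => ι × ι).sum_comp, Fintype.sum_prod_type]
    calc ∑ p : ι × ι, ∑ g : Fin n → ι × ι, chainWeight w ℓ (List.ofFn (Fin.cons p g))
        = ∑ p : ι × ι,
            w ℓ p.1 * w p.1 p.2 * ∑ g : Fin n → ι × ι, chainWeight w p.2 (List.ofFn g) := by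
          simp [List.ofFn_succ, chainWeight, mul_sum]
      _ ≤ ∑ p : ι × ι, w ℓ p.1 * w p.1 p.2 * M ^ (2 * n) := by
          gcongr with p
          · exact mul_nonneg (hw _ _) (hw _ _)
          · exact ih p.2
      _ = (∑ i, w ℓ i * ∑ j, w i j) * M ^ (2 * n) := by
          simp [Fintype.sum_prod_type, mul_sum, sum_mul]
      _ ≤ (∑ i, w ℓ i * M) * M ^ (2 * n) := by
          gcongr with i
          · exact hw _ _
          · exact hM i
      _ ≤ M * M * M ^ (2 * n) := by
          rw [← sum_mul]
          gcongr
          exact hM ℓ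
      _ = M ^ (2 * (n + 1)) := by ring

section NormedRing

variable [NormedRing E] [StarRing E]

def pairProd (x : ι → E) (L : List (ι × ι)) : E :=
  (L.map fun p => x p.1 * star (x p.2)).prod

variable {x : ι → E} {w : ι → ι → ℝ} {M : ℝ}

theorem norm_pairProd_cons_le_prod (h₁ : ∀ i j, ‖x i * star (x j)‖ ≤ w i j ^ 2)
    (p : ι × ι) (L : List (ι × ι)) :
    ‖pairProd x (p :: L)‖ ≤ ((p :: L).map fun q => w q.1 q.2 ^ 2).prod := by
  induction L generalizing p with
  | nil => simpa [pairProd] using h₁ p.1 p.2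
  | cons q L ih =>
    calc ‖pairProd x (p :: q :: L)‖ ≤ ‖x p.1 * star (x p.2)‖ * ‖pairProd x (q :: L)‖ :=
          norm_mul_le _ _
      _ ≤ w p.1 p.2 ^ 2 * ((q :: L).map fun q => w q.1 q.2 ^ 2).prod := by
          gcongr
          · exact h₁ p.1 p.2
          · exact ih q
      _ = _ := rfl

variable [NormedStarGroup E]

/-- The crossed grouping `(x ℓ⋆ x i₁) (x j₁⋆ x i₂) ⋯ x jₙ⋆` times the straight grouping
`(x i₁ x j₁⋆) ⋯ (x iₙ x jₙ⋆)`; the two are estimated together so that the induction closes. -/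
theorem norm_star_mul_pairProd_mul_le (h₂ : ∀ i j, ‖star (x i) * x j‖ ≤ w i j ^ 2)
    (hx : ∀ i, ‖x i‖ ≤ M) (ℓ : ι) (L : List (ι × ι)) :
    ‖star (x ℓ) * pairProd x L‖ * (L.map fun q => w q.1 q.2 ^ 2).prod ≤
      M * chainWeight w ℓ L ^ 2 := by
  induction L generalizing ℓ with
  | nil => simpa [pairProd, chainWeight] using hx ℓ
  | cons q L ih =>
    have hsplit : star (x ℓ) * pairProd x (q :: L) =
        (star (x ℓ) * x q.1) * (star (x q.2) * pairProd x L) := by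
      simp only [pairProd, List.map_cons, List.prod_cons, mul_assoc]
    have hA : 0 ≤ (L.map fun q => w q.1 q.2 ^ 2).prod :=
      List.prod_nonneg (by simp only [List.mem_map]; rintro _ ⟨q, -, rfl⟩; positivity)
    calc ‖star (x ℓ) * pairProd x (q :: L)‖ * ((q :: L).map fun q => w q.1 q.2 ^ 2).prod
        ≤ (w ℓ q.1 ^ 2 * ‖star (x q.2) * pairProd x L‖) *
            (w q.1 q.2 ^ 2 * (L.map fun q => w q.1 q.2 ^ 2).prod) := by
          rw [hsplit, List.map_cons, List.prod_cons]
          gcongr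
          exact (norm_mul_le _ _).trans (mul_le_mul_of_nonneg_right (h₂ _ _) (norm_nonneg _))
      _ = (w ℓ q.1 * w q.1 q.2) ^ 2 *
            (‖star (x q.2) * pairProd x L‖ * (L.map fun q => w q.1 q.2 ^ 2).prod) := by ring
      _ ≤ (w ℓ q.1 * w q.1 q.2) ^ 2 * (M * chainWeight w q.2 L ^ 2) :=
          mul_le_mul_of_nonneg_left (ih q.2) (sq_nonneg _)
      _ = M * chainWeight w ℓ (q :: L) ^ 2 := by simp only [chainWeight]; ring

theorem norm_pairProd_cons_le_mul_chainWeight (hw : ∀ i j, 0 ≤ w i j)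
    (h₁ : ∀ i j, ‖x i * star (x j)‖ ≤ w i j ^ 2) (h₂ : ∀ i j, ‖star (x i) * x j‖ ≤ w i j ^ 2)
    (hx : ∀ i, ‖x i‖ ≤ M) (p : ι × ι) (L : List (ι × ι)) :
    ‖pairProd x (p :: L)‖ ≤ M * (w p.1 p.2 * chainWeight w p.2 L) := by
  have hM : 0 ≤ M := (norm_nonneg _).trans (hx p.1)
  have hcross : ‖pairProd x (p :: L)‖ ≤ M * ‖star (x p.2) * pairProd x L‖ := by
    have : pairProd x (p :: L) = x p.1 * (star (x p.2) * pairProd x L) := by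
      simp only [pairProd, List.map_cons, List.prod_cons, mul_assoc]
    rw [this]
    exact (norm_mul_le _ _).trans (mul_le_mul_of_nonneg_right (hx _) (norm_nonneg _))
  have hstraight := norm_pairProd_cons_le_prod h₁ p L
  rw [List.map_cons, List.prod_cons] at hstraight
  rw [← pow_le_pow_iff_left₀ (norm_nonneg _)
    (mul_nonneg hM (mul_nonneg (hw _ _) (chainWeight_nonneg hw _ _))) two_ne_zero]
  calc ‖pairProd x (p :: L)‖ ^ 2
      ≤ (M * ‖star (x p.2) * pairProd x L‖) *
          (w p.1 p.2 ^ 2 * (L.map fun q => w q.1 q.2 ^ 2).prod) := by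
        rw [sq]; exact mul_le_mul hcross hstraight (norm_nonneg _) (by positivity)
    _ = M * w p.1 p.2 ^ 2 *
          (‖star (x p.2) * pairProd x L‖ * (L.map fun q => w q.1 q.2 ^ 2).prod) := by ring
    _ ≤ M * w p.1 p.2 ^ 2 * (M * chainWeight w p.2 L ^ 2) :=
        mul_le_mul_of_nonneg_left (norm_star_mul_pairProd_mul_le h₂ hx p.2 L) (by positivity)
    _ = (M * (w p.1 p.2 * chainWeight w p.2 L)) ^ 2 := by ring

theorem norm_mul_star_pow_le [Fintype ι] (hw : ∀ i j, 0 ≤ w i j)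
    (h₁ : ∀ i j, ‖x i * star (x j)‖ ≤ w i j ^ 2) (h₂ : ∀ i j, ‖star (x i) * x j‖ ≤ w i j ^ 2)
    (hx : ∀ i, ‖x i‖ ≤ M) (hM : ∀ i, ∑ j, w i j ≤ M) {n : ℕ} (hn : n ≠ 0) :
    ‖((∑ i, x i) * star (∑ i, x i)) ^ n‖ ≤ Fintype.card ι * M ^ (2 * n) := by
  obtain ⟨n, rfl⟩ := Nat.exists_eq_succ_of_ne_zero hn
  have hexpand : (∑ i, x i) * star (∑ i, x i) = ∑ p : ι × ι, x p.1 * star (x p.2) := by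
    rw [star_sum, sum_mul_sum]
    exact (Fintype.sum_prod_type' _).symm
  have hwords : ∀ m, ((∑ i, x i) * star (∑ i, x i)) ^ m =
      ∑ g : Fin m → ι × ι, pairProd x (List.ofFn g) := fun m => by
    rw [hexpand, Fintype.sum_pow_eq_sum_list_prod_ofFn]
    simp only [pairProd, List.map_ofFn]
    rfl
  rw [pow_succ', hwords, hexpand, sum_mul_sum]
  calc ‖∑ p : ι × ι, ∑ g : Fin n → ι × ι, x p.1 * star (x p.2) * pairProd x (List.ofFn g)‖
      ≤ ∑ p : ι × ι, ∑ g : Fin n → ι × ι, ‖pairProd x (p :: List.ofFn g)‖ :=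
        (norm_sum_le _ _).trans (sum_le_sum fun p _ => norm_sum_le _ _)
    _ ≤ ∑ p : ι × ι, ∑ g : Fin n → ι × ι,
          M * (w p.1 p.2 * chainWeight w p.2 (List.ofFn g)) := by
        gcongr with p _ g _
        exact norm_pairProd_cons_le_mul_chainWeight hw h₁ h₂ hx p _
    _ = ∑ p : ι × ι,
          M * w p.1 p.2 * ∑ g : Fin n → ι × ι, chainWeight w p.2 (List.ofFn g) := by
        simp only [mul_sum, mul_assoc]
    _ ≤ ∑ p : ι × ι, M * w p.1 p.2 * M ^ (2 * n) := by
        gcongr with p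
        · exact mul_nonneg ((norm_nonneg _).trans (hx p.1)) (hw _ _)
        · exact sum_chainWeight_le hw hM n p.2
    _ = ∑ i, M ^ (2 * n + 1) * ∑ j, w i j := by
        rw [Fintype.sum_prod_type]
        simp only [mul_sum]
        exact sum_congr rfl fun i _ => sum_congr rfl fun j _ => by ring
    _ ≤ ∑ i : ι, M ^ (2 * n + 1) * M :=
        sum_le_sum fun i _ =>
          mul_le_mul_of_nonneg_left (hM i) (pow_nonneg ((norm_nonneg _).trans (hx i)) _)
    _ = Fintype.card ι * M ^ (2 * (n + 1)) := by
        rw [sum_const, card_univ, nsmul_eq_mul]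
        ring

end NormedRing

end CotlarStein

open CotlarStein in
theorem norm_sum_le_of_almost_orthogonal {ι E : Type*} [NormedRing E] [StarRing E] [CStarRing E]
    [Fintype ι] (x : ι → E) (w : ι → ι → ℝ) {M : ℝ} (hw : ∀ i j, 0 ≤ w i j)
    (h₁ : ∀ i j, ‖x i * star (x j)‖ ≤ w i j ^ 2) (h₂ : ∀ i j, ‖star (x i) * x j‖ ≤ w i j ^ 2)
    (hM₀ : 0 ≤ M) (hM : ∀ i, ∑ j, w i j ≤ M) :
    ‖∑ i, x i‖ ≤ M := by
  have hx : ∀ i, ‖x i‖ ≤ M := fun i => by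
    have hsq : ‖x i‖ ^ 2 ≤ w i i ^ 2 := by
      rw [sq, ← CStarRing.norm_self_mul_star]
      exact h₁ i i
    exact ((pow_le_pow_iff_left₀ (norm_nonneg _) (hw i i) two_ne_zero).1 hsq).trans
      ((single_le_sum (fun j _ => hw i j) (mem_univ i)).trans (hM i))
  refine Real.le_of_frequently_pow_le_mul_pow (c := Fintype.card ι) hM₀
    (frequently_atTop.2 fun N => ⟨2 * 2 ^ N, ?_, ?_⟩)
  · exact (Nat.lt_two_pow_self).le.trans (Nat.le_mul_of_pos_left _ two_pos)
  · rw [pow_mul, sq, ← CStarRing.norm_self_mul_star,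
      ← (IsSelfAdjoint.mul_star_self _).norm_pow_two_pow]
    exact norm_mul_star_pow_le hw h₁ h₂ hx hM (pow_ne_zero _ two_ne_zero)

theorem summable_two_rpow_neg_abs_div_two : Summable fun k : ℤ => (2 : ℝ) ^ (-(|k| : ℝ) / 2) := by
  have hgeom : Summable fun n : ℕ => (2 : ℝ) ^ (-(n : ℝ) / 2) := by
    refine (summable_geometric_of_lt_one (r := (2 : ℝ) ^ (-(1 : ℝ) / 2)) (by positivity)
      (Real.rpow_lt_one_of_one_lt_of_neg one_lt_two (by norm_num))).congr fun n => ?_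
    rw [← Real.rpow_natCast, ← Real.rpow_mul zero_le_two]
    ring_nf
  exact .of_nat_of_neg (by simpa using hgeom) (by simpa using hgeom)

theorem sum_comp_natCast_sub_le_tsum {f : ℤ → ℝ} (hf₀ : ∀ k, 0 ≤ f k) (hf : Summable f)
    (s : Finset ℕ) (a : ℕ) : ∑ j ∈ s, f (j - a) ≤ ∑' k, f k := by
  have hinj : Function.Injective fun j : ℕ => (j : ℤ) - a := fun i j h => by simpa using h
  have := hf.sum_le_tsum (s.map ⟨_, hinj⟩) fun k _ => hf₀ k
  rwa [sum_map] at this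

theorem norm_smul_mul_smul_le {𝕜 A : Type*} [NormedField 𝕜] [NormedRing A] [NormedAlgebra 𝕜 A]
    {a b : 𝕜} (ha : ‖a‖ ≤ 1) (hb : ‖b‖ ≤ 1) (x y : A) : ‖(a • x) * (b • y)‖ ≤ ‖x * y‖ := by
  rw [smul_mul_smul, norm_smul, norm_mul]
  exact mul_le_of_le_one_left (norm_nonneg _) (mul_le_one₀ ha (norm_nonneg _) hb)

theorem stmt6 {H : Type} [NormedAddCommGroup H] [InnerProductSpace ℂ H] [CompleteSpace H]
    (T : ℕ → H →L[ℂ] H) (C : ℝ) (hC : 0 ≤ C)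
    (h1 : ∀ j ℓ : ℕ, ‖(T j).comp (ContinuousLinearMap.adjoint (T ℓ))‖
        ≤ C * (2:ℝ) ^ (-|(j:ℝ) - (ℓ:ℝ)|))
    (h2 : ∀ j ℓ : ℕ, ‖(ContinuousLinearMap.adjoint (T j)).comp (T ℓ)‖
        ≤ C * (2:ℝ) ^ (-|(j:ℝ) - (ℓ:ℝ)|))
    (s : Finset ℕ) (α : ℕ → ℂ) (hα : ∀ j, ‖α j‖ ≤ 1) :
    ‖∑ j ∈ s, α j • T j‖ ≤ Real.sqrt C * ∑' k : ℤ, (2:ℝ) ^ (-(|k| : ℝ) / 2) := by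
  set w : s → s → ℝ := fun i j => √C * (2 : ℝ) ^ (-|(i : ℝ) - j| / 2)
  have hw_sq : ∀ i j, w i j ^ 2 = C * (2 : ℝ) ^ (-|(i : ℝ) - j|) := fun i j => by
    rw [mul_pow, Real.sq_sqrt hC, ← Real.rpow_natCast, ← Real.rpow_mul zero_le_two]
    ring_nf
  have hα' : ∀ j, ‖star (α j)‖ ≤ 1 := fun j => by rw [norm_star]; exact hα j
  have hx₁ : ∀ i j : s, ‖α i • T i * star (α j • T j)‖ ≤ w i j ^ 2 := fun i j => by
    rw [hw_sq, star_smul]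
    exact (norm_smul_mul_smul_le (hα i) (hα' j) _ _).trans (h1 i j)
  have hx₂ : ∀ i j : s, ‖star (α i • T i) * (α j • T j)‖ ≤ w i j ^ 2 := fun i j => by
    rw [hw_sq, star_smul]
    exact (norm_smul_mul_smul_le (hα' i) (hα j) _ _).trans (h2 i j)
  have hM : ∀ i : s, ∑ j, w i j ≤ √C * ∑' k : ℤ, (2 : ℝ) ^ (-(|k| : ℝ) / 2) := fun i => by
    rw [← mul_sum, sum_coe_sort s fun j : ℕ => (2 : ℝ) ^ (-|(i : ℝ) - j| / 2)]
    gcongr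
    refine (sum_congr rfl fun j _ => ?_).trans_le (sum_comp_natCast_sub_le_tsum
      (fun k => by positivity) summable_two_rpow_neg_abs_div_two s i)
    push_cast
    rw [abs_sub_comm]
  rw [← sum_coe_sort s]
  exact norm_sum_le_of_almost_orthogonal _ w (fun _ _ => by positivity) hx₁ hx₂
    (mul_nonneg (Real.sqrt_nonneg _) (tsum_nonneg fun _ => by positivity)) hM
end

section
/- Let K_j be kernels on a quasi-metric measure space (X,ρ,μ) satisfying: (I) K_j(x,y) = 0 when ρ(x,y) > C₁2^{-j}; (III) there are nonnegative functions I_j with |K_j(x,y) − K_j(x,y₀)| ≤ 2^j ρ(y,y₀) I_j(x,y) whenever ρ(y,y₀) ≤ M 2^{-j}, and sup_y ∫ I_j(x,y)dμ(x) ≤ C₃; and (II*) sup_x ∫ |K_j(y,x)| dμ(y) ≤ C₂. Then for every bounded sequence α and all y ≠ y₀ in X, ∫_{ρ(x,y) > 2C_ρ ρ(y,y₀)} |∑_j α_j (K_j(x,y) − K_j(x,y₀))| dμ(x) ≤ C·sup_j |α_j|, where C depends only on C₁/M, C₂, and C₁·C₃. -/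
/-!
Fix `y ≠ y₀` and put `d = ρ(y, y₀)`. On the region `ρ(x, y) > 2 C_ρ d` the quasi-triangle inequality
gives `ρ(x, y₀) > d`, so by the support condition (I) only the scales with `d ≤ C₁ 2^{-j}` contribute.
Each contributing term has `∫ |K_j(x, y) - K_j(x, y₀)| dμ(x)` bounded by `2^j d C₃` through (III)
when `d ≤ M 2^{-j}`, and by `2 C₂` through (II*) otherwise. The first bounds form a geometric series
summing to at most `2 M C₃`; the second kind occurs only for `M / d < 2^j ≤ C₁ / d`, that is for at
most `log₂ (C₁ / M) + 1` scales.
-/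

open MeasureTheory

theorem sum_two_pow_le_two_mul {s : Finset ℕ} {T : ℝ} (hT : 0 ≤ T)
    (hs : ∀ j ∈ s, (2 : ℝ) ^ j ≤ T) : ∑ j ∈ s, (2 : ℝ) ^ j ≤ 2 * T := by
  rcases s.eq_empty_or_nonempty with rfl | hne
  · simpa using hT
  have hlt : ∑ j ∈ s, 2 ^ j < 2 ^ (s.max' hne + 1) :=
    Nat.geomSum_lt le_rfl fun j hj => Nat.lt_succ_of_le (s.le_max' j hj)
  calc ∑ j ∈ s, (2 : ℝ) ^ j = ((∑ j ∈ s, 2 ^ j : ℕ) : ℝ) := by push_cast; rfl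
    _ ≤ 2 ^ (s.max' hne + 1) := by exact_mod_cast hlt.le
    _ = 2 * 2 ^ s.max' hne := by ring
    _ ≤ 2 * T := by gcongr; exact hs _ (s.max'_mem hne)

theorem card_le_max_logb_add_one {s : Finset ℕ} {A B : ℝ} (hA : 0 < A)
    (hs : ∀ j ∈ s, A < (2 : ℝ) ^ j ∧ (2 : ℝ) ^ j ≤ B) :
    (s.card : ℝ) ≤ max 0 (Real.logb 2 (B / A)) + 1 := by
  rcases s.eq_empty_or_nonempty with rfl | hne
  · simpa using add_nonneg (le_max_left 0 (Real.logb 2 (B / A))) zero_le_one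
  set a := s.min' hne
  set b := s.max' hne
  have hab : a ≤ b := s.min'_le _ (s.max'_mem hne)
  have hcard : s.card ≤ b - a + 1 :=
    calc s.card ≤ (Finset.Icc a b).card :=
          Finset.card_le_card fun j hj => Finset.mem_Icc.2 ⟨s.min'_le j hj, s.le_max' j hj⟩
      _ = b - a + 1 := by rw [Nat.card_Icc]; omega
  have hpow : (2 : ℝ) ^ (b - a) * A < B :=
    calc (2 : ℝ) ^ (b - a) * A < 2 ^ (b - a) * 2 ^ a := by
          gcongr; exact (hs a (s.min'_mem hne)).1
      _ = 2 ^ b := by rw [← pow_add, Nat.sub_add_cancel hab]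
      _ ≤ B := (hs b (s.max'_mem hne)).2
  have hlog : ((b - a : ℕ) : ℝ) ≤ Real.logb 2 (B / A) := by
    have hB : 0 < B := lt_trans (by positivity) hpow
    rw [Real.le_logb_iff_rpow_le one_lt_two (by positivity), Real.rpow_natCast, le_div_iff₀ hA]
    exact hpow.le
  calc (s.card : ℝ) ≤ ((b - a : ℕ) : ℝ) + 1 := by exact_mod_cast hcard
    _ ≤ max 0 (Real.logb 2 (B / A)) + 1 := by gcongr; exact hlog.trans (le_max_right _ _)

theorem le_mul_inv_two_pow_iff {d c : ℝ} (hd : 0 < d) (j : ℕ) :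
    d ≤ c * ((2 : ℝ) ^ j)⁻¹ ↔ (2 : ℝ) ^ j ≤ c / d := by
  rw [le_mul_inv_iff₀ (by positivity), le_div_iff₀ hd, mul_comm]

theorem finite_setOf_le_mul_inv_two_pow {d : ℝ} (hd : 0 < d) (c : ℝ) :
    {j : ℕ | d ≤ c * ((2 : ℝ) ^ j)⁻¹}.Finite := by
  have h := (tendsto_pow_atTop_atTop_of_one_lt one_lt_two).eventually_gt_atTop (c / d)
  rw [← Nat.cofinite_eq_atTop, Filter.eventually_cofinite] at h
  simpa only [le_mul_inv_two_pow_iff hd, not_lt] using h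

theorem sum_le_of_dyadic_bounds {J : Finset ℕ} {a : ℕ → ℝ} {d M C₁ C₂ C₃ : ℝ} (hd : 0 < d)
    (hM : 0 < M) (hC₂ : 0 ≤ C₂) (hC₃ : 0 ≤ C₃) (hJ : ∀ j ∈ J, d ≤ C₁ * ((2 : ℝ) ^ j)⁻¹)
    (hsmall : ∀ j, d ≤ M * ((2 : ℝ) ^ j)⁻¹ → a j ≤ 2 ^ j * d * C₃)
    (hlarge : ∀ j, a j ≤ 2 * C₂) :
    ∑ j ∈ J, a j ≤ 2 * M * C₃ + 2 * C₂ * (max 0 (Real.logb 2 (C₁ / M)) + 1) := by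
  simp only [le_mul_inv_two_pow_iff hd] at hJ hsmall
  rw [← Finset.sum_filter_add_sum_filter_not J (fun j => (2 : ℝ) ^ j ≤ M / d)]
  gcongr ?_ + ?_
  · calc ∑ j ∈ J with (2 : ℝ) ^ j ≤ M / d, a j
          ≤ ∑ j ∈ J with (2 : ℝ) ^ j ≤ M / d, 2 ^ j * d * C₃ :=
            Finset.sum_le_sum fun j hj => hsmall j (Finset.mem_filter.1 hj).2
      _ = (∑ j ∈ J with (2 : ℝ) ^ j ≤ M / d, (2 : ℝ) ^ j) * (d * C₃) := by
            rw [Finset.sum_mul]; simp_rw [mul_assoc]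
      _ ≤ 2 * (M / d) * (d * C₃) := by
            gcongr
            exact sum_two_pow_le_two_mul (by positivity) fun j hj => (Finset.mem_filter.1 hj).2
      _ = 2 * M * C₃ := by field_simp
  · calc ∑ j ∈ J with ¬(2 : ℝ) ^ j ≤ M / d, a j
          ≤ (J.filter fun j => ¬(2 : ℝ) ^ j ≤ M / d).card * (2 * C₂) := by
            simpa using Finset.sum_le_card_nsmul _ _ _ fun j _ => hlarge j
      _ ≤ (max 0 (Real.logb 2 ((C₁ / d) / (M / d))) + 1) * (2 * C₂) := by
            gcongr
            exact card_le_max_logb_add_one (by positivity) fun j hj =>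
              ⟨not_le.1 (Finset.mem_filter.1 hj).2, hJ j (Finset.mem_filter.1 hj).1⟩
      _ = 2 * C₂ * (max 0 (Real.logb 2 (C₁ / M)) + 1) := by
            rw [div_div_div_cancel_right₀ hd.ne']; ring

theorem sub_eq_zero_of_lt_dist {X E : Type*} [NormedAddCommGroup E] {ρ : X → X → ℝ} {k : X → X → E} {Cρ r : ℝ} {x y y₀ : X}
    (hρ0 : 0 ≤ ρ y y₀) (hCρ : 1 ≤ Cρ) (htri : ρ x y ≤ Cρ * (ρ x y₀ + ρ y y₀))
    (hsupp : ∀ x y, r < ρ x y → k x y = 0) (hr : r < ρ y y₀) (hx : 2 * Cρ * ρ y y₀ < ρ x y) :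
    k x y - k x y₀ = 0 := by
  have hfar : ρ y y₀ < ρ x y₀ := by nlinarith
  rw [hsupp x y (by nlinarith), hsupp x y₀ (hr.trans hfar), sub_self]

section Kernels

variable {X E : Type*} [MeasurableSpace X] {μ : Measure X} [NormedAddCommGroup E]

theorem integral_norm_le_mul_of_norm_le_mul {f : X → E} {g : X → ℝ} {L C : ℝ} (hL : 0 ≤ L)
    (hfg : ∀ x, ‖f x‖ ≤ L * g x) (hg : Integrable g μ) (hgC : ∫ x, g x ∂μ ≤ C) :
    ∫ x, ‖f x‖ ∂μ ≤ L * C :=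
  calc ∫ x, ‖f x‖ ∂μ ≤ ∫ x, L * g x ∂μ :=
        integral_mono_of_nonneg (ae_of_all _ fun _ => norm_nonneg _) (hg.const_mul L)
          (ae_of_all _ hfg)
    _ = L * ∫ x, g x ∂μ := integral_const_mul L _
    _ ≤ L * C := by gcongr

theorem integral_norm_sub_le_two_mul {f g : X → E} {C : ℝ} (hf : Integrable f μ)
    (hg : Integrable g μ) (hfC : ∫ x, ‖f x‖ ∂μ ≤ C) (hgC : ∫ x, ‖g x‖ ∂μ ≤ C) :
    ∫ x, ‖f x - g x‖ ∂μ ≤ 2 * C :=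
  calc ∫ x, ‖f x - g x‖ ∂μ ≤ ∫ x, ‖f x‖ + ‖g x‖ ∂μ :=
        integral_mono_of_nonneg (ae_of_all _ fun _ => norm_nonneg _) (hf.norm.add hg.norm)
          (ae_of_all _ fun _ => norm_sub_le _ _)
    _ = ∫ x, ‖f x‖ ∂μ + ∫ x, ‖g x‖ ∂μ := integral_add hf.norm hg.norm
    _ ≤ 2 * C := by linarith

theorem setIntegral_norm_tsum_mul_le {R : Type*} [NormedRing R] {f : ℕ → X → R} {α : ℕ → R}
    {B : ℝ} {S : Set X} (J : Finset ℕ) (hS : MeasurableSet S) (hf : ∀ j, Integrable (f j) μ)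
    (hα : ∀ j, ‖α j‖ ≤ B) (hJ : ∀ x ∈ S, ∀ j ∉ J, f j x = 0) :
    ∫ x in S, ‖∑' j, α j * f j x‖ ∂μ ≤ B * ∑ j ∈ J, ∫ x, ‖f j x‖ ∂μ := by
  have hB : 0 ≤ B := (norm_nonneg _).trans (hα 0)
  have hpt : ∀ x ∈ S, ‖∑' j, α j * f j x‖ ≤ B * ∑ j ∈ J, ‖f j x‖ := fun x hx => by
    rw [tsum_eq_sum fun j hj => by rw [hJ x hx j hj, mul_zero], Finset.mul_sum]
    refine (norm_sum_le _ _).trans (Finset.sum_le_sum fun j _ => ?_)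
    exact (norm_mul_le _ _).trans (by gcongr; exact hα j)
  have hint : Integrable (fun x => B * ∑ j ∈ J, ‖f j x‖) μ :=
    (integrable_finsetSum _ fun j _ => (hf j).norm).const_mul B
  calc ∫ x in S, ‖∑' j, α j * f j x‖ ∂μ ≤ ∫ x in S, B * ∑ j ∈ J, ‖f j x‖ ∂μ :=
        integral_mono_of_nonneg (ae_of_all _ fun _ => norm_nonneg _) hint.integrableOn
          ((ae_restrict_mem hS).mono hpt)
    _ ≤ ∫ x, B * ∑ j ∈ J, ‖f j x‖ ∂μ :=
        setIntegral_le_integral hint (ae_of_all _ fun _ => by positivity)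
    _ = B * ∑ j ∈ J, ∫ x, ‖f j x‖ ∂μ := by
        rw [integral_const_mul, integral_finsetSum _ fun j _ => (hf j).norm]

end Kernels

theorem stmt9 : ∃ F : ℝ → ℝ → ℝ → ℝ,
    ∀ (X : Type) [MeasurableSpace X], ∀ (μ : Measure X)
      (ρ : X → X → ℝ) (Cρ C₁ C₂ C₃ M : ℝ)
      (K : ℕ → X → X → ℂ) (I : ℕ → X → X → ℝ),
      (∀ x y, 0 ≤ ρ x y) → (∀ x y, ρ x y = ρ y x) →
      1 ≤ Cρ → (∀ x y y₀, ρ x y ≤ Cρ * (ρ x y₀ + ρ y y₀)) →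
      Measurable (Function.uncurry ρ) →
      0 < C₁ → 0 < C₂ → 0 < C₃ → 0 < M →
      (∀ j, Measurable (Function.uncurry (K j))) →
      -- (I): support condition
      (∀ j x y, C₁ * ((2:ℝ) ^ j)⁻¹ < ρ x y → K j x y = 0) →
      -- (III): Lipschitz smoothing condition with majorants I_j
      (∀ j x y, 0 ≤ I j x y) →
      (∀ j x y y₀, ρ y y₀ ≤ M * ((2:ℝ) ^ j)⁻¹ →
        ‖K j x y - K j x y₀‖ ≤ (2:ℝ) ^ j * ρ y y₀ * I j x y) →
      (∀ j y, Integrable (fun x => I j x y) μ) →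
      (∀ j y, ∫ x, I j x y ∂μ ≤ C₃) →
      -- (II*): mass condition for the adjoint kernels
      (∀ j x, Integrable (fun y => K j y x) μ) →
      (∀ j x, ∫ y, ‖K j y x‖ ∂μ ≤ C₂) →
      ∀ (α : ℕ → ℂ) (B : ℝ), (∀ j, ‖α j‖ ≤ B) →
      ∀ y y₀ : X, y ≠ y₀ →
        ∫ x in {x | 2 * Cρ * ρ y y₀ < ρ x y}, ‖∑' j, α j * (K j x y - K j x y₀)‖ ∂μ
          ≤ F (C₁ / M) C₂ (C₁ * C₃) * B := by
  refine ⟨fun a b c => 2 * c / a + 2 * b * (max 0 (Real.logb 2 a) + 1), ?_⟩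
  intro X _ μ ρ Cρ C₁ C₂ C₃ M K I hρ0 _ hCρ htri hρ hC₁ hC₂ hC₃ hM _ hsupp _ hIII hIint hIbd
    hKint hKbd α B hα y y₀ _
  have hS : MeasurableSet {x | 2 * Cρ * ρ y y₀ < ρ x y} :=
    measurableSet_lt measurable_const (hρ.comp measurable_prodMk_right)
  have hdiff : ∀ j, Integrable (fun x => K j x y - K j x y₀) μ :=
    fun j => (hKint j y).sub (hKint j y₀)
  have hB : 0 ≤ B := (norm_nonneg _).trans (hα 0)
  rcases (hρ0 y y₀).eq_or_lt with hd | hd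
  · have hzero : ∀ j x, K j x y - K j x y₀ = 0 := fun j x =>
      norm_le_zero_iff.1 (by simpa [← hd] using hIII j x y y₀ (by rw [← hd]; positivity))
    calc _ ≤ B * ∑ j ∈ (∅ : Finset ℕ), ∫ x, ‖K j x y - K j x y₀‖ ∂μ :=
          setIntegral_norm_tsum_mul_le ∅ hS hdiff hα fun x _ j _ => hzero j x
      _ = 0 := by simp
      _ ≤ _ := by positivity
  · calc _ ≤ B * ∑ j ∈ (finite_setOf_le_mul_inv_two_pow hd C₁).toFinset,
            ∫ x, ‖K j x y - K j x y₀‖ ∂μ :=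
          setIntegral_norm_tsum_mul_le _ hS hdiff hα fun x hx j hj =>
            sub_eq_zero_of_lt_dist (hρ0 y y₀) hCρ (htri x y y₀) (hsupp j) (by simpa using hj) hx
      _ ≤ B * (2 * M * C₃ + 2 * C₂ * (max 0 (Real.logb 2 (C₁ / M)) + 1)) := by
          gcongr
          exact sum_le_of_dyadic_bounds hd hM hC₂.le hC₃.le (fun j hj => by simpa using hj)
            (fun j hj => integral_norm_le_mul_of_norm_le_mul (by positivity)
              (hIII j · y y₀ hj) (hIint j y) (hIbd j y))
            (fun j => integral_norm_sub_le_two_mul (hKint j y) (hKint j y₀) (hKbd j y) (hKbd j y₀))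
      _ = _ := by field_simp
end

section
/- Let K_j be kernels on (X,ρ,μ) such that both {K_j} and the adjoint kernels {(x,y) ↦ conj(K_j(y,x))} satisfy: (I) support in ρ(x,y) ≤ C₁2^{-j}, (II) sup_x ∫|K_j(x,y)|dμ(y) ≤ C₂, (III) Lipschitz smoothing condition with constants C₃, M, and (IV) |∫ K_j(x,y)dμ(y)| ≤ C₄2^{-j}. Then sup_x ∫_X |∫_X K_j(x,y₀) conj(K_ℓ(y,y₀)) dμ(y₀)| dμ(y) ≤ C·2^{-|j-ℓ|}, where C depends only on C₂, C₁C₃, C₂C₄ and C₁/M. -/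
/-!
Say `ℓ ≤ j`. If the support radius `C₁ 2⁻ʲ` of `K j x ·` is below the smoothness scale `M 2⁻ˡ` of
`K ℓ y ·`, subtract `K ℓ y x` from `K ℓ y y₀` in the inner integral. The subtracted term costs
`|∫ K j x ·| ≤ C₄ 2⁻ʲ` by (IV); the difference is at most `2ˡ ρ x y₀ I ℓ y x ≤ C₁ 2^(ℓ-j) I ℓ y x`
by (I) and (III), and Schur's test integrates it. For `j ≤ ℓ` one subtracts `K j x y` from
`K j x y₀` instead. If the scale condition fails, then `1 < (C₁ / M) 2^(-|j-ℓ|)` and the trivial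
bound `C₂²` from (II) suffices. As `μ` need not be σ-finite, Tonelli is only used on the σ-finite
sets carrying the integrable functions involved.
-/

open MeasureTheory Function
open scoped ENNReal ComplexConjugate

section

variable {X Y E 𝕜 : Type*} [MeasurableSpace X] [MeasurableSpace Y] [NormedAddCommGroup E]
  [RCLike 𝕜] {μ : Measure X} {ν : Measure Y}

theorem integral_norm_le_of_forall_sFinite_le {g : Y → E} {C : ℝ} (hC : 0 ≤ C)
    (h : ∀ ν' ≤ ν, SFinite ν' → ∫⁻ y, ‖g y‖ₑ ∂ν' ≤ ENNReal.ofReal C) :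
    ∫ y, ‖g y‖ ∂ν ≤ C := by
  by_cases hg : Integrable (fun y => ‖g y‖) ν
  swap
  · rw [integral_undef hg]; exact hC
  have hfin := hg.aefinStronglyMeasurable
  have h_compl : ∫⁻ y in hfin.sigmaFiniteSetᶜ, ‖g y‖ₑ ∂ν = 0 := by
    refine (lintegral_congr_ae ?_).trans lintegral_zero
    filter_upwards [hfin.ae_eq_zero_compl] with y hy
    simpa using hy
  rw [integral_eq_lintegral_of_nonneg_ae (ae_of_all _ fun _ => norm_nonneg _) hg.1]
  refine ENNReal.toReal_le_of_le_ofReal hC ?_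
  simp_rw [ofReal_norm]
  rw [← lintegral_add_compl _ hfin.measurableSet, h_compl, add_zero]
  exact h _ Measure.restrict_le_self inferInstance

theorem lintegral_lintegral_enorm_mul_le [SFinite ν] {f : X → E} (hf : Integrable f μ)
    {b : Y → X → ℝ≥0∞} (hb : Measurable (uncurry b)) {C : ℝ≥0∞}
    (hC : ∀ x, f x ≠ 0 → ∫⁻ y, b y x ∂ν ≤ C) :
    ∫⁻ y, ∫⁻ x, ‖f x‖ₑ * b y x ∂μ ∂ν ≤ (∫⁻ x, ‖f x‖ₑ ∂μ) * C := by
  have hfin := hf.aefinStronglyMeasurable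
  set S := hfin.sigmaFiniteSet
  have h_restrict (y : Y) : ∫⁻ x, ‖f x‖ₑ * b y x ∂μ = ∫⁻ x in S, ‖f x‖ₑ * b y x ∂μ := by
    have h_compl : ∫⁻ x in Sᶜ, ‖f x‖ₑ * b y x ∂μ = 0 := by
      refine (lintegral_congr_ae ?_).trans lintegral_zero
      filter_upwards [hfin.ae_eq_zero_compl] with x hx
      simp [hx]
    rw [← lintegral_add_compl _ hfin.measurableSet, h_compl, add_zero]
  have h_meas : AEMeasurable (uncurry fun y x => ‖f x‖ₑ * b y x) (ν.prod (μ.restrict S)) :=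
    hf.1.enorm.restrict.comp_snd.mul hb.aemeasurable
  calc ∫⁻ y, ∫⁻ x, ‖f x‖ₑ * b y x ∂μ ∂ν
      = ∫⁻ x in S, ∫⁻ y, ‖f x‖ₑ * b y x ∂ν ∂μ := by
        simp_rw [h_restrict]; exact lintegral_lintegral_swap h_meas
    _ = ∫⁻ x in S, ‖f x‖ₑ * ∫⁻ y, b y x ∂ν ∂μ := by
        simp_rw [lintegral_const_mul' _ _ enorm_ne_top]
    _ ≤ ∫⁻ x, ‖f x‖ₑ * C ∂μ := by
        refine (lintegral_mono fun x => ?_).trans (setLIntegral_le_lintegral _ _)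
        by_cases hx : f x = 0
        · simp [hx]
        · exact mul_le_mul_right (hC x hx) _
    _ = (∫⁻ x, ‖f x‖ₑ ∂μ) * C := lintegral_mul_const'' _ hf.1.enorm

theorem enorm_integral_mul_le {f g : X → 𝕜} (hf : Integrable f μ) (c : 𝕜) :
    ‖∫ x, f x * g x ∂μ‖ₑ ≤ ∫⁻ x, ‖f x‖ₑ * ‖g x - c‖ₑ ∂μ + ‖∫ x, f x ∂μ‖ₑ * ‖c‖ₑ := by
  by_cases hfg : Integrable (fun x => f x * g x) μ
  swap
  · simp [integral_undef hfg]
  have h_split : ∫ x, f x * g x ∂μ = ∫ x, f x * (g x - c) ∂μ + (∫ x, f x ∂μ) * c := by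
    rw [← integral_mul_const, ← integral_add _ (hf.mul_const c)]
    · simp_rw [mul_sub, sub_add_cancel]
    · convert hfg.sub (hf.mul_const c) using 1
      ext x; simp [mul_sub]
  calc ‖∫ x, f x * g x ∂μ‖ₑ
      ≤ ‖∫ x, f x * (g x - c) ∂μ‖ₑ + ‖(∫ x, f x ∂μ) * c‖ₑ := h_split ▸ enorm_add_le _ _
    _ ≤ ∫⁻ x, ‖f x‖ₑ * ‖g x - c‖ₑ ∂μ + ‖∫ x, f x ∂μ‖ₑ * ‖c‖ₑ := by
        simp_rw [← enorm_mul]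
        exact add_le_add_left (enorm_integral_le_lintegral_enorm _) _

theorem integral_norm_integral_mul_conj_le_of_lintegral_sub {A : X → 𝕜} {B : Y → X → 𝕜}
    {c : Y → 𝕜} (hA : Integrable A μ) (hB : Measurable (uncurry B)) (hc : Measurable c)
    {CA CW CI CB : ℝ} (hCA : 0 ≤ CA) (hCW : 0 ≤ CW) (hCI : 0 ≤ CI) (hCB : 0 ≤ CB)
    (hA_mass : ∫ x, ‖A x‖ ∂μ ≤ CA) (hA_cancel : ‖∫ x, A x ∂μ‖ ≤ CI)
    (hc_mass : ∫⁻ y, ‖c y‖ₑ ∂ν ≤ ENNReal.ofReal CB)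
    (hB_sub : ∀ x, A x ≠ 0 → ∫⁻ y, ‖B y x - c y‖ₑ ∂ν ≤ ENNReal.ofReal CW) :
    ∫ y, ‖∫ x, A x * conj (B y x) ∂μ‖ ∂ν ≤ CA * CW + CI * CB := by
  refine integral_norm_le_of_forall_sFinite_le (by positivity) fun ν' hν' _ => ?_
  have h_pt (y : Y) : ‖∫ x, A x * conj (B y x) ∂μ‖ₑ
      ≤ ∫⁻ x, ‖A x‖ₑ * ‖B y x - c y‖ₑ ∂μ + ‖∫ x, A x ∂μ‖ₑ * ‖c y‖ₑ := by
    simpa [← map_sub] using enorm_integral_mul_le (g := fun x => conj (B y x)) hA (conj (c y))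
  have h_meas : Measurable (uncurry fun y x => ‖B y x - c y‖ₑ) :=
    (hB.sub (hc.comp measurable_fst)).enorm
  calc ∫⁻ y, ‖∫ x, A x * conj (B y x) ∂μ‖ₑ ∂ν'
      ≤ ∫⁻ y, (∫⁻ x, ‖A x‖ₑ * ‖B y x - c y‖ₑ ∂μ + ‖∫ x, A x ∂μ‖ₑ * ‖c y‖ₑ) ∂ν' :=
        lintegral_mono h_pt
    _ = ∫⁻ y, ∫⁻ x, ‖A x‖ₑ * ‖B y x - c y‖ₑ ∂μ ∂ν' + ‖∫ x, A x ∂μ‖ₑ * ∫⁻ y, ‖c y‖ₑ ∂ν' := by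
        rw [lintegral_add_right' _ (hc.enorm.const_mul _).aemeasurable,
          lintegral_const_mul' _ _ enorm_ne_top]
    _ ≤ ENNReal.ofReal CA * ENNReal.ofReal CW + ENNReal.ofReal CI * ENNReal.ofReal CB := by
        gcongr
        · calc _ ≤ (∫⁻ x, ‖A x‖ₑ ∂μ) * ENNReal.ofReal CW :=
                lintegral_lintegral_enorm_mul_le hA h_meas
                  fun x hx => (lintegral_mono' hν' le_rfl).trans (hB_sub x hx)
            _ ≤ _ := by
                rw [← ofReal_integral_norm_eq_lintegral_enorm hA]
                gcongr
        · rw [← ofReal_norm]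
          exact ENNReal.ofReal_le_ofReal hA_cancel
        · exact (lintegral_mono' hν' le_rfl).trans hc_mass
    _ = ENNReal.ofReal (CA * CW + CI * CB) := by
        rw [ENNReal.ofReal_add (by positivity) (by positivity), ENNReal.ofReal_mul hCA,
          ENNReal.ofReal_mul hCI]

theorem integral_norm_integral_mul_conj_le_of_norm_sub {A : X → 𝕜} {B : X → X → 𝕜} {J : X → ℝ}
    (hA : Integrable A μ) (hB : ∀ y, Integrable (B y) μ) (hJ : Integrable J μ)
    (hJ_nonneg : ∀ y, 0 ≤ J y) (h_sub : ∀ y x, B y x ≠ 0 → ‖A x - A y‖ ≤ J y)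
    {CA CJ CI CB : ℝ} (hCI : 0 ≤ CI) (hCB : 0 ≤ CB)
    (hA_mass : ∫ x, ‖A x‖ ∂μ ≤ CA) (hJ_mass : ∫ y, J y ∂μ ≤ CJ)
    (hB_mass : ∀ y, ∫ x, ‖B y x‖ ∂μ ≤ CB) (hB_cancel : ∀ y, ‖∫ x, B y x ∂μ‖ ≤ CI) :
    ∫ y, ‖∫ x, A x * conj (B y x) ∂μ‖ ∂μ ≤ CJ * CB + CA * CI := by
  have h_pt (y : X) : ‖∫ x, A x * conj (B y x) ∂μ‖ ≤ J y * CB + ‖A y‖ * CI := by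
    have hB' : Integrable (fun x => conj (B y x)) μ :=
      RCLike.conjCLE.toContinuousLinearMap.integrable_comp (hB y)
    have h_rhs : 0 ≤ J y * CB + ‖A y‖ * CI := by have := hJ_nonneg y; positivity
    rw [← ENNReal.ofReal_le_ofReal_iff h_rhs, ofReal_norm]
    calc ‖∫ x, A x * conj (B y x) ∂μ‖ₑ = ‖∫ x, conj (B y x) * A x ∂μ‖ₑ := by
          simp_rw [mul_comm]
      _ ≤ ∫⁻ x, ‖conj (B y x)‖ₑ * ‖A x - A y‖ₑ ∂μ + ‖∫ x, conj (B y x) ∂μ‖ₑ * ‖A y‖ₑ :=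
        enorm_integral_mul_le hB' (A y)
      _ ≤ ∫⁻ x, ‖B y x‖ₑ * ENNReal.ofReal (J y) ∂μ + ENNReal.ofReal CI * ‖A y‖ₑ := by
        rw [integral_conj, RCLike.enorm_conj, ← ofReal_norm (∫ x, B y x ∂μ)]
        gcongr ?_ + ?_ * _
        · refine lintegral_mono fun x => ?_
          by_cases hx : B y x = 0
          · simp [hx]
          · rw [RCLike.enorm_conj, ← ofReal_norm (A x - A y)]
            gcongr
            exact h_sub y x hx
        · exact ENNReal.ofReal_le_ofReal (hB_cancel y)
      _ ≤ ENNReal.ofReal CB * ENNReal.ofReal (J y) + ENNReal.ofReal CI * ‖A y‖ₑ := by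
        rw [lintegral_mul_const'' _ (hB y).1.enorm,
          ← ofReal_integral_norm_eq_lintegral_enorm (hB y)]
        gcongr
        exact hB_mass y
      _ = ENNReal.ofReal (J y * CB + ‖A y‖ * CI) := by
        rw [ENNReal.ofReal_add (mul_nonneg (hJ_nonneg y) hCB) (by positivity), ← ofReal_norm,
          ← ENNReal.ofReal_mul hCB, ← ENNReal.ofReal_mul hCI, mul_comm CB, mul_comm CI]
  calc ∫ y, ‖∫ x, A x * conj (B y x) ∂μ‖ ∂μ ≤ ∫ y, (J y * CB + ‖A y‖ * CI) ∂μ :=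
        integral_mono_of_nonneg (ae_of_all _ fun _ => norm_nonneg _)
          ((hJ.mul_const CB).add (hA.norm.mul_const CI)) (ae_of_all _ h_pt)
    _ = (∫ y, J y ∂μ) * CB + (∫ y, ‖A y‖ ∂μ) * CI := by
        rw [integral_add (hJ.mul_const CB) (hA.norm.mul_const CI), integral_mul_const,
          integral_mul_const]
    _ ≤ CJ * CB + CA * CI := by gcongr

end

theorem rpow_neg_abs_sub_of_le {b : ℝ} (hb : 0 < b) {m n : ℕ} (h : m ≤ n) :
    b ^ (-|(n : ℝ) - m|) = b ^ m / b ^ n := by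
  rw [abs_of_nonneg (sub_nonneg.2 (Nat.cast_le.2 h)), neg_sub, Real.rpow_sub hb,
    Real.rpow_natCast, Real.rpow_natCast]

theorem le_mul_two_pow_div_of_scale {C₁ C₂ C₃ C₄ M Q : ℝ} {m n : ℕ} (hC₁ : 0 ≤ C₁)
    (hC₂ : 0 ≤ C₂) (hC₃ : 0 ≤ C₃) (hC₄ : 0 ≤ C₄) (hM : 0 < M)
    (h_fine : C₁ * ((2 : ℝ) ^ n)⁻¹ ≤ M * ((2 : ℝ) ^ m)⁻¹ →
      Q ≤ C₂ * (C₁ * C₃) * (2 ^ m / 2 ^ n) + C₂ * C₄ * ((2 : ℝ) ^ n)⁻¹)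
    (h_sq : Q ≤ C₂ ^ 2) :
    Q ≤ (C₂ * (C₁ * C₃) + C₂ * C₄ + C₂ ^ 2 * (C₁ / M)) * (2 ^ m / 2 ^ n) := by
  have h_ratio : 0 ≤ (2 : ℝ) ^ m / 2 ^ n := by positivity
  by_cases h_scale : C₁ * ((2 : ℝ) ^ n)⁻¹ ≤ M * ((2 : ℝ) ^ m)⁻¹
  · have h_inv : ((2 : ℝ) ^ n)⁻¹ ≤ 2 ^ m / 2 ^ n := by
      rw [div_eq_mul_inv]
      exact le_mul_of_one_le_left (by positivity) (one_le_pow₀ one_le_two)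
    calc Q ≤ C₂ * (C₁ * C₃) * (2 ^ m / 2 ^ n) + C₂ * C₄ * ((2 : ℝ) ^ n)⁻¹ := h_fine h_scale
      _ ≤ C₂ * (C₁ * C₃) * (2 ^ m / 2 ^ n) + C₂ * C₄ * (2 ^ m / 2 ^ n) := by gcongr
      _ ≤ _ := by
          nlinarith [mul_nonneg (mul_nonneg (sq_nonneg C₂) (div_nonneg hC₁ hM.le)) h_ratio]
  · have h_one : 1 ≤ C₁ / M * (2 ^ m / 2 ^ n) := by
      have h_lt : M < C₁ * (2 ^ m / 2 ^ n) :=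
        calc M = M * ((2 : ℝ) ^ m)⁻¹ * 2 ^ m := by field_simp
          _ < C₁ * ((2 : ℝ) ^ n)⁻¹ * 2 ^ m :=
            mul_lt_mul_of_pos_right (not_le.1 h_scale) (by positivity)
          _ = C₁ * (2 ^ m / 2 ^ n) := by ring
      rw [div_mul_eq_mul_div, le_div_iff₀ hM, one_mul]
      exact h_lt.le
    calc Q ≤ C₂ ^ 2 * 1 := by rw [mul_one]; exact h_sq
      _ ≤ C₂ ^ 2 * (C₁ / M * (2 ^ m / 2 ^ n)) := by gcongr
      _ ≤ _ := by nlinarith [mul_nonneg (mul_nonneg hC₂ (mul_nonneg hC₁ hC₃)) h_ratio,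
          mul_nonneg (mul_nonneg hC₂ hC₄) h_ratio]

/-- Conditions (I)–(IV) for the family `K` alone, with (III) in the second variable and `I j` the
Lipschitz majorants. -/
structure KernelConditions {X 𝕜 : Type*} [MeasurableSpace X] [RCLike 𝕜] (μ : Measure X)
    (ρ : X → X → ℝ) (K : ℕ → X → X → 𝕜) (I : ℕ → X → X → ℝ) (C₁ C₂ C₃ C₄ M : ℝ) : Prop where
  measurable : ∀ j, Measurable (uncurry (K j))
  integrable_row : ∀ j x, Integrable (fun y => K j x y) μ
  integrable_col : ∀ j y, Integrable (fun x => K j x y) μ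
  support : ∀ j x y, C₁ * ((2 : ℝ) ^ j)⁻¹ < ρ x y → K j x y = 0
  mass_row : ∀ j x, ∫ y, ‖K j x y‖ ∂μ ≤ C₂
  mass_col : ∀ j y, ∫ x, ‖K j x y‖ ∂μ ≤ C₂
  smooth_nonneg : ∀ j x y, 0 ≤ I j x y
  smooth : ∀ j x y y₀, ρ y y₀ ≤ M * ((2 : ℝ) ^ j)⁻¹ →
    ‖K j x y - K j x y₀‖ ≤ (2 : ℝ) ^ j * ρ y y₀ * I j x y
  integrable_smooth_row : ∀ j x, Integrable (fun y => I j x y) μ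
  integrable_smooth_col : ∀ j y, Integrable (fun x => I j x y) μ
  smooth_mass_row : ∀ j x, ∫ y, I j x y ∂μ ≤ C₃
  smooth_mass_col : ∀ j y, ∫ x, I j x y ∂μ ≤ C₃
  cancel : ∀ j x, ‖∫ y, K j x y ∂μ‖ ≤ C₄ * ((2 : ℝ) ^ j)⁻¹

namespace KernelConditions

variable {X 𝕜 : Type*} [MeasurableSpace X] [RCLike 𝕜] {μ : Measure X} {ρ : X → X → ℝ}
  {K : ℕ → X → X → 𝕜} {I : ℕ → X → X → ℝ} {C₁ C₂ C₃ C₄ M : ℝ}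

theorem rho_le_of_ne_zero (hK : KernelConditions μ ρ K I C₁ C₂ C₃ C₄ M) {j : ℕ} {x y : X}
    (h : K j x y ≠ 0) : ρ x y ≤ C₁ * ((2 : ℝ) ^ j)⁻¹ :=
  not_lt.1 (mt (hK.support j x y) h)

theorem lintegral_enorm_col_le (hK : KernelConditions μ ρ K I C₁ C₂ C₃ C₄ M) (j : ℕ) (y : X) :
    ∫⁻ x, ‖K j x y‖ₑ ∂μ ≤ ENNReal.ofReal C₂ := by
  rw [← ofReal_integral_norm_eq_lintegral_enorm (hK.integrable_col j y)]
  exact ENNReal.ofReal_le_ofReal (hK.mass_col j y)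

theorem lintegral_enorm_sub_le (hK : KernelConditions μ ρ K I C₁ C₂ C₃ C₄ M) {j : ℕ}
    {x₀ x : X} {r : ℝ} (hr₀ : 0 ≤ r) (hr : ρ x₀ x ≤ r) (hrM : r ≤ M * ((2 : ℝ) ^ j)⁻¹) :
    ∫⁻ y, ‖K j y x - K j y x₀‖ₑ ∂μ ≤ ENNReal.ofReal (2 ^ j * r * C₃) := by
  have h_pt (y : X) : ‖K j y x - K j y x₀‖ₑ ≤ ENNReal.ofReal (2 ^ j * r * I j y x₀) := by
    rw [enorm_sub_rev, ← ofReal_norm]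
    gcongr
    calc _ ≤ 2 ^ j * ρ x₀ x * I j y x₀ := hK.smooth j y x₀ x (hr.trans hrM)
      _ ≤ _ := by gcongr; exact hK.smooth_nonneg j y x₀
  have h_nonneg (y : X) : 0 ≤ 2 ^ j * r * I j y x₀ := by
    have := hK.smooth_nonneg j y x₀; positivity
  calc ∫⁻ y, ‖K j y x - K j y x₀‖ₑ ∂μ ≤ ∫⁻ y, ENNReal.ofReal (2 ^ j * r * I j y x₀) ∂μ :=
        lintegral_mono h_pt
    _ = ENNReal.ofReal (∫ y, 2 ^ j * r * I j y x₀ ∂μ) :=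
        (ofReal_integral_eq_lintegral_ofReal ((hK.integrable_smooth_col j x₀).const_mul _)
          (ae_of_all _ h_nonneg)).symm
    _ ≤ _ := by
        rw [integral_const_mul]
        gcongr
        exact hK.smooth_mass_col j x₀

theorem integral_norm_integral_mul_conj_le_sq
    (hK : KernelConditions μ ρ K I C₁ C₂ C₃ C₄ M)
    (hC₂ : 0 ≤ C₂) (j ℓ : ℕ) (x₀ : X) :
    ∫ y, ‖∫ x, K j x₀ x * conj (K ℓ y x) ∂μ‖ ∂μ ≤ C₂ ^ 2 := by
  have := integral_norm_integral_mul_conj_le_of_lintegral_sub (c := 0) (CI := C₂)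
    (hK.integrable_row j x₀) (hK.measurable ℓ) measurable_const hC₂ hC₂ hC₂ le_rfl
    (hK.mass_row j x₀) ((norm_integral_le_integral_norm _).trans (hK.mass_row j x₀))
    (by simp) fun x _ => by simpa using hK.lintegral_enorm_col_le ℓ x
  simpa [sq] using this

theorem integral_norm_integral_mul_conj_le_of_left_finer
    (hK : KernelConditions μ ρ K I C₁ C₂ C₃ C₄ M)
    (hC₁ : 0 ≤ C₁) (hC₂ : 0 ≤ C₂) (hC₃ : 0 ≤ C₃) (hC₄ : 0 ≤ C₄) {j ℓ : ℕ}
    (h_scale : C₁ * ((2 : ℝ) ^ j)⁻¹ ≤ M * ((2 : ℝ) ^ ℓ)⁻¹) (x₀ : X) :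
    ∫ y, ‖∫ x, K j x₀ x * conj (K ℓ y x) ∂μ‖ ∂μ
      ≤ C₂ * (C₁ * C₃) * (2 ^ ℓ / 2 ^ j) + C₂ * C₄ * ((2 : ℝ) ^ j)⁻¹ := by
  have h_sub (x : X) (hx : K j x₀ x ≠ 0) : ∫⁻ y, ‖K ℓ y x - K ℓ y x₀‖ₑ ∂μ
      ≤ ENNReal.ofReal (2 ^ ℓ * (C₁ * ((2 : ℝ) ^ j)⁻¹) * C₃) :=
    hK.lintegral_enorm_sub_le (by positivity) (hK.rho_le_of_ne_zero hx) h_scale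
  calc _ ≤ C₂ * (2 ^ ℓ * (C₁ * ((2 : ℝ) ^ j)⁻¹) * C₃) + C₄ * ((2 : ℝ) ^ j)⁻¹ * C₂ :=
        integral_norm_integral_mul_conj_le_of_lintegral_sub (hK.integrable_row j x₀)
          (hK.measurable ℓ) ((hK.measurable ℓ).comp (measurable_id.prodMk measurable_const))
          hC₂ (by positivity) (by positivity) hC₂ (hK.mass_row j x₀) (hK.cancel j x₀)
          (hK.lintegral_enorm_col_le ℓ x₀) h_sub
    _ = _ := by ring

theorem integral_norm_integral_mul_conj_le_of_right_finer
    (hK : KernelConditions μ ρ K I C₁ C₂ C₃ C₄ M)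
    (hC₁ : 0 ≤ C₁) (hC₂ : 0 ≤ C₂) (hC₄ : 0 ≤ C₄) {j ℓ : ℕ}
    (h_scale : C₁ * ((2 : ℝ) ^ ℓ)⁻¹ ≤ M * ((2 : ℝ) ^ j)⁻¹) (x₀ : X) :
    ∫ y, ‖∫ x, K j x₀ x * conj (K ℓ y x) ∂μ‖ ∂μ
      ≤ C₂ * (C₁ * C₃) * (2 ^ j / 2 ^ ℓ) + C₂ * C₄ * ((2 : ℝ) ^ ℓ)⁻¹ := by
  set c : ℝ := 2 ^ j * (C₁ * ((2 : ℝ) ^ ℓ)⁻¹) with hc_def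
  have hc : 0 ≤ c := by positivity
  have h_sub (y x : X) (hyx : K ℓ y x ≠ 0) : ‖K j x₀ x - K j x₀ y‖ ≤ c * I j x₀ y := by
    rw [norm_sub_rev]
    calc _ ≤ 2 ^ j * ρ y x * I j x₀ y :=
          hK.smooth j x₀ y x ((hK.rho_le_of_ne_zero hyx).trans h_scale)
      _ ≤ _ := by rw [hc_def]; gcongr; exacts [hK.smooth_nonneg j x₀ y, hK.rho_le_of_ne_zero hyx]
  calc _ ≤ c * C₃ * C₂ + C₂ * (C₄ * ((2 : ℝ) ^ ℓ)⁻¹) :=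
        integral_norm_integral_mul_conj_le_of_norm_sub (hK.integrable_row j x₀)
          (hK.integrable_row ℓ) ((hK.integrable_smooth_row j x₀).const_mul c)
          (fun y => mul_nonneg hc (hK.smooth_nonneg j x₀ y)) h_sub (by positivity) hC₂
          (hK.mass_row j x₀) (by rw [integral_const_mul]; gcongr; exact hK.smooth_mass_row j x₀)
          (hK.mass_row ℓ) (hK.cancel ℓ)
    _ = _ := by ring

end KernelConditions

theorem stmt10 : ∃ F : ℝ → ℝ → ℝ → ℝ → ℝ,
    ∀ (X : Type) [MeasurableSpace X], ∀ (μ : Measure X)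
      (ρ : X → X → ℝ) (Cρ C₁ C₂ C₃ C₄ M : ℝ)
      (K : ℕ → X → X → ℂ) (I I' : ℕ → X → X → ℝ),
      (∀ x y, 0 ≤ ρ x y) → (∀ x y, ρ x y = ρ y x) →
      1 ≤ Cρ → (∀ x y y₀, ρ x y ≤ Cρ * (ρ x y₀ + ρ y y₀)) →
      Measurable (Function.uncurry ρ) →
      0 < C₁ → 0 < C₂ → 0 < C₃ → 0 < C₄ → 0 < M →
      (∀ j, Measurable (Function.uncurry (K j))) →
      (∀ j x, Integrable (fun y => K j x y) μ) →
      (∀ j y, Integrable (fun x => K j x y) μ) →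
      -- (I): support condition (the same for K and its adjoint)
      (∀ j x y, C₁ * ((2:ℝ) ^ j)⁻¹ < ρ x y → K j x y = 0) →
      -- (II): mass condition for K and its adjoint
      (∀ j x, ∫ y, ‖K j x y‖ ∂μ ≤ C₂) →
      (∀ j y, ∫ x, ‖K j x y‖ ∂μ ≤ C₂) →
      -- (III): Lipschitz smoothing condition for K
      (∀ j x y, 0 ≤ I j x y) →
      (∀ j x y y₀, ρ y y₀ ≤ M * ((2:ℝ) ^ j)⁻¹ →
        ‖K j x y - K j x y₀‖ ≤ (2:ℝ) ^ j * ρ y y₀ * I j x y) →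
      (∀ j x, Integrable (fun y => I j x y) μ) →
      (∀ j y, Integrable (fun x => I j x y) μ) →
      (∀ j x, ∫ y, I j x y ∂μ ≤ C₃) →
      (∀ j y, ∫ x, I j x y ∂μ ≤ C₃) →
      -- (III): Lipschitz smoothing condition for the adjoint kernels
      (∀ j x y, 0 ≤ I' j x y) →
      (∀ j x y y₀, ρ y y₀ ≤ M * ((2:ℝ) ^ j)⁻¹ →
        ‖K j y x - K j y₀ x‖ ≤ (2:ℝ) ^ j * ρ y y₀ * I' j x y) →
      (∀ j x, Integrable (fun y => I' j x y) μ) →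
      (∀ j y, Integrable (fun x => I' j x y) μ) →
      (∀ j x, ∫ y, I' j x y ∂μ ≤ C₃) →
      (∀ j y, ∫ x, I' j x y ∂μ ≤ C₃) →
      -- (IV): cancellation condition for K and its adjoint
      (∀ j x, ‖∫ y, K j x y ∂μ‖ ≤ C₄ * ((2:ℝ) ^ j)⁻¹) →
      (∀ j x, ‖∫ y, K j y x ∂μ‖ ≤ C₄ * ((2:ℝ) ^ j)⁻¹) →
      ∀ (j ℓ : ℕ) (x : X),
        ∫ y, ‖∫ y₀, K j x y₀ * (starRingEnd ℂ) (K ℓ y y₀) ∂μ‖ ∂μ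
          ≤ F C₂ (C₁ * C₃) (C₂ * C₄) (C₁ / M) * (2:ℝ) ^ (-|(j:ℝ) - (ℓ:ℝ)|) := by
  refine ⟨fun a b c d => a * b + c + a ^ 2 * d, ?_⟩
  intro X _ μ ρ _ C₁ C₂ C₃ C₄ M K I _ _ _ _ _ _ hC₁ hC₂ hC₃ hC₄ hM hK_meas hK_int_row hK_int_col
    hK_supp hK_mass_row hK_mass_col hI_nonneg hK_smooth hI_int_row hI_int_col hI_mass_row
    hI_mass_col _ _ _ _ _ _ hK_cancel _ j ℓ x
  have hK : KernelConditions μ ρ K I C₁ C₂ C₃ C₄ M :=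
    ⟨hK_meas, hK_int_row, hK_int_col, hK_supp, hK_mass_row, hK_mass_col, hI_nonneg, hK_smooth,
      hI_int_row, hI_int_col, hI_mass_row, hI_mass_col, hK_cancel⟩
  have h_sq := hK.integral_norm_integral_mul_conj_le_sq hC₂.le j ℓ x
  rcases le_total ℓ j with hℓj | hjℓ
  · rw [rpow_neg_abs_sub_of_le two_pos hℓj]
    exact le_mul_two_pow_div_of_scale hC₁.le hC₂.le hC₃.le hC₄.le hM
      (hK.integral_norm_integral_mul_conj_le_of_left_finer hC₁.le hC₂.le hC₃.le hC₄.le · x) h_sq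
  · rw [abs_sub_comm, rpow_neg_abs_sub_of_le two_pos hjℓ]
    exact le_mul_two_pow_div_of_scale hC₁.le hC₂.le hC₃.le hC₄.le hM
      (hK.integral_norm_integral_mul_conj_le_of_right_finer hC₁.le hC₂.le hC₄.le · x) h_sq
end
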